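/- arXiv:math/0003215 — 6 statements merged into one kernel-verified Lean document; each statement's English description precedes it below -/
import Mathlib

section
/- Let 1 ≤ p ≤ ∞ with conjugate exponent p', let Γ = (a, b) be a real interval, u ∈ L^{p'}(Γ) and v₁, v₂ ∈ L^p(Γ). With A(Γ, u, v) = sup_{‖f‖_p = 1} inf_{α ∈ ℝ} ‖v(x)(∫_a^x u f dt − α)‖_p, one has |A(Γ, u, v₁) − A(Γ, u, v₂)| ≤ 2 ‖v₁ − v₂‖_p ‖u‖_{p'}. -/
/-!
Fix `f` with `‖f‖_p ≤ 1` and let `F x = ∫_a^x u f`. By Hölder, `|F| ≤ M := ‖u f‖₁ ≤ ‖u‖_{p'}`,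
so clamping `α` to `[-M, M]` only decreases `‖v (F - α)‖_p` and the infimum over `α` may be
taken over `|α| ≤ M`. For such `α` we have `|F - α| ≤ 2 M`, and the triangle inequality gives
`‖v₁ (F - α)‖_p ≤ ‖v₂ (F - α)‖_p + 2 M ‖v₁ - v₂‖_p`.
-/

open MeasureTheory ENNReal NNReal

/-- The best rank-one approximation functional `A(Γ, u, v)` of the Hardy operator
`T f(x) = v(x) ∫_a^x u f dt` on the set `S ⊆ ℝ` with base point `a`:
`A = sup_{f ∈ L^p(S), ‖f‖_p ≤ 1} inf_{α ∈ ℝ} ‖v·(∫_a^· u f − α)‖_{p,S}`. -/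
noncomputable def hardyA (p : ℝ≥0∞) (a : ℝ) (S : Set ℝ) (u v : ℝ → ℝ) : ℝ≥0∞ :=
  ⨆ (f : ℝ → ℝ) (_ : MeasureTheory.MemLp f p (MeasureTheory.volume.restrict S) ∧
      MeasureTheory.eLpNorm f p (MeasureTheory.volume.restrict S) ≤ 1),
    ⨅ α : ℝ, MeasureTheory.eLpNorm
      (fun x => v x * ((∫ t in Set.Ioc a x ∩ S, u t * f t) - α)) p
      (MeasureTheory.volume.restrict S)

lemma abs_sub_max_min_le {M y α : ℝ} (hy : |y| ≤ M) :
    |y - max (-M) (min M α)| ≤ |y - α| := by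
  rw [abs_le] at hy
  cases abs_cases (y - α) <;> cases abs_cases (y - max (-M) (min M α)) <;>
    cases max_cases (-M) (min M α) <;> cases min_cases M α <;> linarith

section WeightPerturbation

variable {X : Type*} [MeasurableSpace X] {μ : Measure X} {p : ℝ≥0∞} {w w₁ w₂ F : X → ℝ}
  {M : ℝ≥0}

lemma eLpNorm_mul_sub_max_min_le (hFM : ∀ x, |F x| ≤ M) (α : ℝ) :
    eLpNorm (fun x => w x * (F x - max (-(M : ℝ)) (min (M : ℝ) α))) p μ
      ≤ eLpNorm (fun x => w x * (F x - α)) p μ :=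
  eLpNorm_mono fun x => by
    simp only [Real.norm_eq_abs, abs_mul]
    exact mul_le_mul_of_nonneg_left (abs_sub_max_min_le (hFM x)) (abs_nonneg _)

lemma eLpNorm_mul_sub_le_of_abs_le (hFM : ∀ x, |F x| ≤ M) {β : ℝ} (hβ : |β| ≤ M) :
    eLpNorm (fun x => w x * (F x - β)) p μ ≤ 2 * M * eLpNorm w p μ := by
  have hbound : ∀ x, ‖w x * (F x - β)‖ ≤ (2 * M) * ‖w x‖ := fun x => by
    rw [Real.norm_eq_abs, Real.norm_eq_abs, abs_mul, mul_comm]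
    gcongr
    linarith [abs_sub (F x) β, hFM x]
  calc eLpNorm (fun x => w x * (F x - β)) p μ
      ≤ ENNReal.ofReal (2 * M) * eLpNorm w p μ :=
        eLpNorm_le_mul_eLpNorm_of_ae_le_mul (.of_forall hbound) p
    _ = 2 * M * eLpNorm w p μ := by
        rw [ENNReal.ofReal_mul zero_le_two, ENNReal.ofReal_ofNat, ofReal_coe_nnreal]

lemma iInf_eLpNorm_mul_sub_le (hp : 1 ≤ p) (hw₁ : AEStronglyMeasurable w₁ μ)
    (hw₂ : AEStronglyMeasurable w₂ μ) (hF : AEStronglyMeasurable F μ) (hFM : ∀ x, |F x| ≤ M) :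
    ⨅ α : ℝ, eLpNorm (fun x => w₁ x * (F x - α)) p μ
      ≤ (⨅ α : ℝ, eLpNorm (fun x => w₂ x * (F x - α)) p μ)
        + 2 * M * eLpNorm (w₁ - w₂) p μ := by
  rw [ENNReal.iInf_add]
  refine le_iInf fun α => iInf_le_of_le (max (-(M : ℝ)) (min (M : ℝ) α)) ?_
  set β := max (-(M : ℝ)) (min (M : ℝ) α)
  have hβ : |β| ≤ M := abs_le.mpr ⟨le_max_left _ _, max_le (by simp) (min_le_left _ _)⟩
  have hsplit : (fun x => w₁ x * (F x - β))
      = (fun x => w₂ x * (F x - β)) + fun x => (w₁ - w₂) x * (F x - β) := by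
    funext x; simp only [Pi.add_apply, Pi.sub_apply]; ring
  calc eLpNorm (fun x => w₁ x * (F x - β)) p μ
      ≤ eLpNorm (fun x => w₂ x * (F x - β)) p μ
        + eLpNorm (fun x => (w₁ - w₂) x * (F x - β)) p μ := by
        rw [hsplit]
        exact eLpNorm_add_le (hw₂.mul (hF.sub aestronglyMeasurable_const))
          ((hw₁.sub hw₂).mul (hF.sub aestronglyMeasurable_const)) hp
    _ ≤ eLpNorm (fun x => w₂ x * (F x - α)) p μ + 2 * M * eLpNorm (w₁ - w₂) p μ :=
        add_le_add (eLpNorm_mul_sub_max_min_le hFM α) (eLpNorm_mul_sub_le_of_abs_le hFM hβ)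

end WeightPerturbation

lemma eLpNorm_mul_le_mul_eLpNorm {X : Type*} [MeasurableSpace X] {μ : Measure X}
    {p q : ℝ≥0∞} (hpq : 1 / p + 1 / q = 1) {u f : X → ℝ} (hu : AEStronglyMeasurable u μ)
    (hf : AEStronglyMeasurable f μ) :
    eLpNorm (fun t => u t * f t) 1 μ ≤ eLpNorm u q μ * eLpNorm f p μ := by
  have : HolderTriple q p 1 := ⟨by simpa only [inv_one, one_div, add_comm] using hpq⟩
  exact (eLpNorm_smul_le_mul_eLpNorm hf hu : eLpNorm (u • f) 1 μ ≤ eLpNorm u q μ * eLpNorm f p μ)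

lemma enorm_setIntegral_le_eLpNorm_one {X : Type*} [MeasurableSpace X] (μ : Measure X)
    (g : X → ℝ) (s : Set X) : ‖∫ t in s, g t ∂μ‖ₑ ≤ eLpNorm g 1 μ := by
  rw [eLpNorm_one_eq_lintegral_enorm]
  exact (enorm_integral_le_lintegral_enorm g).trans
    (lintegral_mono' Measure.restrict_le_self le_rfl)

lemma continuous_setIntegral_Ioc_inter {S : Set ℝ} {g : ℝ → ℝ}
    (hg : Integrable g (volume.restrict S)) (a : ℝ) :
    Continuous fun x => ∫ t in Set.Ioc a x ∩ S, g t := by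
  have hprim : (fun x => ∫ t in Set.Ioc a x ∩ S, g t)
      = (fun y => ∫ t in a..y, g t ∂(volume.restrict S)) ∘ fun x => max a x := by
    funext x
    rcases le_total a x with h | h
    · rw [Function.comp_apply, max_eq_right h, intervalIntegral.integral_of_le h,
        Measure.restrict_restrict measurableSet_Ioc]
    · simp [max_eq_left h, Set.Ioc_eq_empty (not_lt.mpr h)]
  rw [hprim]
  exact (hg.continuous_primitive a).comp (continuous_const.max continuous_id)

lemma hardyA_le_add {p q : ℝ≥0∞} (hp : 1 ≤ p) (hpq : 1 / p + 1 / q = 1) (a : ℝ) {S : Set ℝ}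
    {u w₁ w₂ : ℝ → ℝ} (hu : MemLp u q (volume.restrict S))
    (hw₁ : AEStronglyMeasurable w₁ (volume.restrict S))
    (hw₂ : AEStronglyMeasurable w₂ (volume.restrict S)) :
    hardyA p a S u w₁ ≤ hardyA p a S u w₂
        + 2 * (eLpNorm (w₁ - w₂) p (volume.restrict S) * eLpNorm u q (volume.restrict S)) := by
  refine iSup₂_le fun f ⟨hf, hf1⟩ => ?_
  have huf : eLpNorm (fun t => u t * f t) 1 (volume.restrict S) ≤ eLpNorm u q (volume.restrict S) :=
    (eLpNorm_mul_le_mul_eLpNorm hpq hu.1 hf.1).trans (mul_le_of_le_one_right' hf1)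
  have huf_int : Integrable (fun t => u t * f t) (volume.restrict S) :=
    memLp_one_iff_integrable.mp ⟨hu.1.mul hf.1, huf.trans_lt hu.2⟩
  set M := (eLpNorm (fun t => u t * f t) 1 (volume.restrict S)).toNNReal
  have hM : (M : ℝ≥0∞) = eLpNorm (fun t => u t * f t) 1 (volume.restrict S) :=
    coe_toNNReal (huf.trans_lt hu.2).ne
  have hFM : ∀ x, |∫ t in Set.Ioc a x ∩ S, u t * f t| ≤ M := fun x => by
    have h := enorm_setIntegral_le_eLpNorm_one (volume.restrict S) (fun t => u t * f t)
      (Set.Ioc a x)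
    rwa [Measure.restrict_restrict measurableSet_Ioc, ← hM, enorm_le_coe, ← NNReal.coe_le_coe,
      coe_nnnorm, Real.norm_eq_abs] at h
  refine (iInf_eLpNorm_mul_sub_le hp hw₁ hw₂
    (continuous_setIntegral_Ioc_inter huf_int a).aestronglyMeasurable hFM).trans
    (add_le_add (le_iSup₂_of_le f ⟨hf, hf1⟩ le_rfl) ?_)
  rw [mul_assoc, mul_comm (M : ℝ≥0∞), hM]
  gcongr

theorem stmt_6_general (p q : ℝ≥0∞) (hp : 1 ≤ p) (hpq : 1 / p + 1 / q = 1)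
    (a : ℝ) (S : Set ℝ) (u v₁ v₂ : ℝ → ℝ)
    (hu : MemLp u q (volume.restrict S))
    (hv₁ : MemLp v₁ p (volume.restrict S)) (hv₂ : MemLp v₂ p (volume.restrict S)) :
    hardyA p a S u v₁ ≤ hardyA p a S u v₂
        + 2 * (eLpNorm (v₁ - v₂) p (volume.restrict S) * eLpNorm u q (volume.restrict S)) ∧
    hardyA p a S u v₂ ≤ hardyA p a S u v₁
        + 2 * (eLpNorm (v₁ - v₂) p (volume.restrict S) * eLpNorm u q (volume.restrict S)) :=
  ⟨hardyA_le_add hp hpq a hu hv₁.1 hv₂.1, by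
    simpa only [eLpNorm_sub_comm] using hardyA_le_add hp hpq a hu hv₂.1 hv₁.1⟩

/-- Lipschitz continuity of `A(Γ, u, v)` in the weight `v`, with constant 2:
`|A(Γ, u, v₁) − A(Γ, u, v₂)| ≤ 2 ‖v₁ − v₂‖_p ‖u‖_{p'}` (as two one-sided inequalities in
`ℝ≥0∞`). Here `1/p + 1/p' = 1`. -/
theorem stmt_6 (p q : ℝ≥0∞) (hp : 1 ≤ p) (hpq : 1 / p + 1 / q = 1)
    (a : ℝ) (S : Set ℝ) (hS : MeasurableSet S) (u v₁ v₂ : ℝ → ℝ)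
    (hu : MemLp u q (volume.restrict S))
    (hv₁ : MemLp v₁ p (volume.restrict S)) (hv₂ : MemLp v₂ p (volume.restrict S)) :
    hardyA p a S u v₁ ≤ hardyA p a S u v₂
        + 2 * (eLpNorm (v₁ - v₂) p (volume.restrict S) * eLpNorm u q (volume.restrict S)) ∧
    hardyA p a S u v₂ ≤ hardyA p a S u v₁
        + 2 * (eLpNorm (v₁ - v₂) p (volume.restrict S) * eLpNorm u q (volume.restrict S)) :=
  stmt_6_general p q hp hpq a S u v₁ v₂ hu hv₁ hv₂
end

section
/- Let I = (a,b) be a bounded interval, γ ∈ ℝ, and let u_s : I → [0,∞) be bounded measurable. For p = 1 define A(I; u_s, γ) := |γ| sup_{‖f‖ ≤ 1, f a finite measure} inf_{α ∈ ℝ} ‖∫_a^x u_s df − α‖_{1,I} (equivalently the L¹ approximation quantity including point masses). Then A(I; u_s, γ) ≥ (1/4) |γ| · sup_{t ∈ (0, |I|)} t · (u_s χ_I)^*(t), where g^* denotes the non-increasing rearrangement of g. -/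
open MeasureTheory ENNReal

/-- The `L¹` Hardy best-approximation functional with constant `v = γ`, where test "functions"
are (finite, positive) measures `ρ` of total mass at most one (this includes point masses):
`A(I; u, γ) = |γ| · sup_{ρ(ℝ) ≤ 1} inf_{α ∈ ℝ} ‖(∫_{(a,x] ∩ S} u dρ) − α‖_{1,S}`. -/
noncomputable def hardyA1M (a : ℝ) (S : Set ℝ) (u : ℝ → ℝ) (γ : ℝ) : ℝ≥0∞ :=
  ENNReal.ofReal |γ| *
    ⨆ (ρ : Measure ℝ) (_ : ρ Set.univ ≤ 1),
      ⨅ α : ℝ, eLpNorm (fun x => (∫ t in Set.Ioc a x ∩ S, u t ∂ρ) - α) 1 (volume.restrict S)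

/-- The distribution function `g_*(t) = |{x ∈ S : g(x) ≥ t}|`. -/
noncomputable def distFn (S : Set ℝ) (g : ℝ → ℝ) (t : ℝ) : ℝ :=
  (volume {x ∈ S | t ≤ g x}).toReal

/-- The non-increasing rearrangement `g^*(x) = inf {t ≥ 0 : g_*(t) ≤ x}`. -/
noncomputable def rearr (S : Set ℝ) (g : ℝ → ℝ) (x : ℝ) : ℝ :=
  sInf {t : ℝ | 0 ≤ t ∧ distFn S g t ≤ x}

/-! If `β = (u χ_I)^*(t) > 0`, the level set `{u ≥ β/2}` has measure `> t`, so it contains a point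
`y` at distance `≥ t/2` from both ends of `I`. Against the Dirac mass at `y` the Hardy primitive is
`u y · 1_{[y,b)}`, and every constant `α` misses it by `|α|` on `(a,y)` and by `|u y - α|` on
`(y,b)`, two intervals of length `≥ t/2`; so the `L¹` distance is at least `u y · t/2 ≥ β t/4`. -/

open Set

theorem lt_distFn_of_lt_rearr {S : Set ℝ} {g : ℝ → ℝ} {x s : ℝ} (hs : 0 ≤ s)
    (h : s < rearr S g x) : x < distFn S g s := by
  by_contra! hle
  exact h.not_ge (csInf_le ⟨0, fun _ ht => ht.1⟩ ⟨hs, hle⟩)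

theorem exists_mem_of_ofReal_lt_volume {a b r : ℝ} {M : Set ℝ} (hM : M ⊆ Ioo a b)
    (hr : ENNReal.ofReal r < volume M) : ∃ y ∈ M, a + r / 2 ≤ y ∧ y + r / 2 ≤ b := by
  by_contra! h
  have hsub : M ⊆ Ioo a (a + r / 2) ∪ Ioo (b - r / 2) b := by
    intro x hx
    obtain ⟨hax, hxb⟩ := hM hx
    by_cases hx' : a + r / 2 ≤ x
    · exact Or.inr ⟨by linarith [h x hx hx'], hxb⟩
    · exact Or.inl ⟨hax, not_le.1 hx'⟩
  refine hr.not_ge ((measure_mono hsub).trans ((measure_union_le _ _).trans ?_))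
  rw [Real.volume_Ioo, Real.volume_Ioo, add_sub_cancel_left, sub_sub_cancel b]
  rcases le_or_gt 0 r with hr0 | hr0
  · rw [← ENNReal.ofReal_add (by positivity) (by positivity), add_halves]
  · simp [ENNReal.ofReal_of_nonpos (by linarith : r / 2 ≤ 0)]

theorem setIntegral_Ioc_inter_dirac {a y : ℝ} {S : Set ℝ} (u : ℝ → ℝ) (hay : a < y)
    (hy : y ∈ S) (x : ℝ) :
    ∫ s in Ioc a x ∩ S, u s ∂Measure.dirac y = (Ici y).indicator (fun _ => u y) x := by
  classical
  simp [setIntegral_dirac, indicator, hay, hy]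

theorem ofReal_mul_le_eLpNorm_indicator_sub {a b y r : ℝ} (c α : ℝ) (hr : 0 ≤ r)
    (hya : a + r ≤ y) (hyb : y + r ≤ b) :
    ENNReal.ofReal (|c| * r) ≤
      eLpNorm (fun x => (Ici y).indicator (fun _ => c) x - α) 1 (volume.restrict (Ioo a b)) := by
  have hsub : Ioo a y ∪ Ioo y b ⊆ Ioo a b :=
    union_subset (Ioo_subset_Ioo_right (by linarith)) (Ioo_subset_Ioo_left (by linarith))
  have hleft : ∫⁻ x in Ioo a y, ‖(Ici y).indicator (fun _ => c) x - α‖ₑ =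
      ENNReal.ofReal |α| * ENNReal.ofReal (y - a) := by
    rw [setLIntegral_congr_fun measurableSet_Ioo (g := fun _ => ENNReal.ofReal |α|),
      setLIntegral_const, Real.volume_Ioo]
    intro x hx
    simp [indicator_of_notMem (notMem_Ici.2 hx.2), Real.enorm_eq_ofReal_abs]
  have hright : ∫⁻ x in Ioo y b, ‖(Ici y).indicator (fun _ => c) x - α‖ₑ =
      ENNReal.ofReal |c - α| * ENNReal.ofReal (b - y) := by
    rw [setLIntegral_congr_fun measurableSet_Ioo (g := fun _ => ENNReal.ofReal |c - α|),
      setLIntegral_const, Real.volume_Ioo]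
    intro x hx
    simp [indicator_of_mem (mem_Ici.2 hx.1.le), Real.enorm_eq_ofReal_abs]
  have hc : |c| ≤ |α| + |c - α| := by simpa using abs_add_le α (c - α)
  rw [eLpNorm_one_eq_lintegral_enorm]
  calc ENNReal.ofReal (|c| * r)
      ≤ ENNReal.ofReal |α| * ENNReal.ofReal r + ENNReal.ofReal |c - α| * ENNReal.ofReal r := by
        rw [← add_mul, ← ENNReal.ofReal_add (abs_nonneg _) (abs_nonneg _),
          ← ENNReal.ofReal_mul (by positivity)]
        exact ENNReal.ofReal_le_ofReal (mul_le_mul_of_nonneg_right hc hr)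
    _ ≤ ENNReal.ofReal |α| * ENNReal.ofReal (y - a)
          + ENNReal.ofReal |c - α| * ENNReal.ofReal (b - y) := by
        gcongr <;> linarith
    _ = ∫⁻ x in Ioo a y ∪ Ioo y b, ‖(Ici y).indicator (fun _ => c) x - α‖ₑ := by
        rw [lintegral_union measurableSet_Ioo
          (disjoint_left.2 fun _ h₁ h₂ => lt_asymm h₁.2 h₂.1), hleft, hright]
    _ ≤ _ := lintegral_mono_set hsub

theorem le_hardyA1M {a : ℝ} {S : Set ℝ} {u : ℝ → ℝ} (γ : ℝ) {ρ : Measure ℝ} (hρ : ρ univ ≤ 1) :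
    ENNReal.ofReal |γ| *
        ⨅ α : ℝ, eLpNorm (fun x => (∫ t in Ioc a x ∩ S, u t ∂ρ) - α) 1 (volume.restrict S) ≤
      hardyA1M a S u γ :=
  mul_le_mul_right (le_iSup₂ (f := fun (ρ : Measure ℝ) (_ : ρ univ ≤ 1) => ⨅ α : ℝ,
    eLpNorm (fun x => (∫ t in Ioc a x ∩ S, u t ∂ρ) - α) 1 (volume.restrict S)) ρ hρ) _

theorem ofReal_mul_le_hardyA1M {a b y r : ℝ} (u : ℝ → ℝ) (γ : ℝ) (hr : 0 < r)
    (hya : a + r ≤ y) (hyb : y + r ≤ b) :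
    ENNReal.ofReal (|γ| * (|u y| * r)) ≤ hardyA1M a (Ioo a b) u γ := by
  have hy : y ∈ Ioo a b := ⟨by linarith, by linarith⟩
  refine le_trans ?_ (le_hardyA1M γ (ρ := Measure.dirac y) (by simp))
  rw [ENNReal.ofReal_mul (abs_nonneg γ)]
  simp only [setIntegral_Ioc_inter_dirac u hy.1 hy]
  exact mul_le_mul_right (le_iInf fun α => ofReal_mul_le_eLpNorm_indicator_sub _ α hr.le hya hyb) _

theorem stmt_8_general (a b : ℝ) (γ : ℝ) (us : ℝ → ℝ) :
    ∀ t ∈ Set.Ioo (0 : ℝ) (b - a),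
      ENNReal.ofReal (|γ| / 4 * (t * rearr (Set.Ioo a b) us t))
        ≤ hardyA1M a (Set.Ioo a b) us γ := by
  rintro t ⟨ht, -⟩
  set β := rearr (Ioo a b) us t
  rcases le_or_gt β 0 with hβ | hβ
  · rw [ENNReal.ofReal_of_nonpos (mul_nonpos_of_nonneg_of_nonpos (by positivity)
      (mul_nonpos_of_nonneg_of_nonpos ht.le hβ))]
    exact zero_le
  have hlevel : ENNReal.ofReal t < volume {x ∈ Ioo a b | β / 2 ≤ us x} :=
    ((ENNReal.ofReal_lt_ofReal_iff_of_nonneg ht.le).2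
      (lt_distFn_of_lt_rearr (by positivity) (by linarith))).trans_le ENNReal.ofReal_toReal_le
  obtain ⟨y, ⟨-, hβy⟩, hya, hyb⟩ := exists_mem_of_ofReal_lt_volume (sep_subset _ _) hlevel
  have hβ_le_abs : β / 2 ≤ |us y| := hβy.trans (le_abs_self _)
  calc ENNReal.ofReal (|γ| / 4 * (t * β))
      = ENNReal.ofReal (|γ| * (β / 2 * (t / 2))) := by ring_nf
    _ ≤ ENNReal.ofReal (|γ| * (|us y| * (t / 2))) := by gcongr
    _ ≤ hardyA1M a (Ioo a b) us γ := ofReal_mul_le_hardyA1M us γ (by positivity) hya hyb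

/-- (Case `p = 1`.) For bounded measurable `u_s ≥ 0` on a bounded interval
`I = (a,b)`, `A(I; u_s, γ) ≥ (1/4)|γ| · sup_{t ∈ (0,|I|)} t · (u_s χ_I)^*(t)`. -/
theorem stmt_8 (a b : ℝ) (hab : a < b) (γ : ℝ) (us : ℝ → ℝ) (hmeas : Measurable us)
    (hbd : ∃ C : ℝ, ∀ t ∈ Set.Ioo a b, 0 ≤ us t ∧ us t ≤ C) :
    ∀ t ∈ Set.Ioo (0 : ℝ) (b - a),
      ENNReal.ofReal (|γ| / 4 * (t * rearr (Set.Ioo a b) us t))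
        ≤ hardyA1M a (Set.Ioo a b) us γ :=
  stmt_8_general a b γ us
end

section
/- Let I = (a,b) be a bounded interval, γ, δ ∈ ℝ with δ ≥ u_s(t) ≥ 0 on I, and p = 1. Then for any α > 1, A(I; δ, γ) − A(I; u_s, γ) ≤ (α/2) ∫_I |γ| (δ − u_s(t)) dt + |γ| δ |I| / (2α), where A(I; δ, γ) = |γ| δ |I| / 2 is the constant-weight value. -/
open MeasureTheory ENNReal

open Set

/-!
For the constant weight `δ`, approximating the primitive `F x = δ ∫_a^x f` by its value at the
midpoint `m` of `I` gives `∫_I |F - F m| ≤ |δ| (|I| / 2) ‖f‖₁`, because `|F x - F m|` is at most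
the mass of `|δ f|` on the half of `I` containing `x`.

For `u_s`, test with the normalised indicator of the middle subinterval `J` of length `|I| / α`.
Its primitive vanishes on the left margin and is constant, equal to the mean `H` of `u_s` on `J`,
on the right margin; both margins have length `ℓ = |I| (α - 1) / (2α)`, and no constant is within
`|H| / 2` of both values, so `A(I; u_s, γ) ≥ |γ| ℓ |H| = |γ| (α - 1) / 2 · ∫_J u_s`.
Since `u_s ≤ δ`, `∫_J u_s ≥ δ |I| / α - ∫_I (δ - u_s)`, and the right-hand side of the theorem
then exceeds `|γ| δ |I| / 2` by `|γ| / 2 · ∫_I (δ - u_s) ≥ 0`.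
-/

lemma setLIntegral_enorm_intervalIntegral_le (g : ℝ → ℝ) {s : Set ℝ} (hs : MeasurableSet s)
    {m : ℝ} (hsub : ∀ x ∈ s, uIoc m x ⊆ s) :
    ∫⁻ x in s, ‖∫ t in m..x, g t‖ₑ ≤ (∫⁻ t in s, ‖g t‖ₑ) * volume s := by
  calc ∫⁻ x in s, ‖∫ t in m..x, g t‖ₑ ≤ ∫⁻ _ in s, ∫⁻ t in s, ‖g t‖ₑ := by
        refine setLIntegral_mono' hs fun x hx => ?_
        calc ‖∫ t in m..x, g t‖ₑ = ‖∫ t in uIoc m x, g t‖ₑ := by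
              simp only [← ofReal_norm, intervalIntegral.norm_integral_eq_norm_integral_uIoc]
          _ ≤ ∫⁻ t in uIoc m x, ‖g t‖ₑ := enorm_integral_le_lintegral_enorm _
          _ ≤ ∫⁻ t in s, ‖g t‖ₑ := lintegral_mono_set (hsub x hx)
    _ = (∫⁻ t in s, ‖g t‖ₑ) * volume s := setLIntegral_const _ _

lemma setLIntegral_enorm_intervalIntegral_midpoint_le (g : ℝ → ℝ) (a b : ℝ) :
    ∫⁻ x in Ioo a b, ‖∫ t in (a + b) / 2..x, g t‖ₑ
      ≤ ENNReal.ofReal ((b - a) / 2) * ∫⁻ t in Ioo a b, ‖g t‖ₑ := by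
  rcases le_or_gt b a with hba | hab
  · simp [Ioo_eq_empty_of_le hba]
  set m := (a + b) / 2 with hm
  have ham : a < m := by linarith
  have hmb : m < b := by linarith
  have hsplit : Ioc a m ∪ Ioo m b = Ioo a b := Ioc_union_Ioo_eq_Ioo ham.le hmb
  have hdisj : Disjoint (Ioc a m) (Ioo m b) :=
    disjoint_left.2 fun x hx hx' => (not_lt.2 hx.2) hx'.1
  have hleft := setLIntegral_enorm_intervalIntegral_le g measurableSet_Ioc (s := Ioc a m)
    (m := m) fun x hx => by rw [uIoc_of_ge hx.2]; exact Ioc_subset_Ioc_left hx.1.le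
  have hright := setLIntegral_enorm_intervalIntegral_le g measurableSet_Ioo (s := Ioo m b)
    (m := m) fun x hx => by rw [uIoc_of_le hx.1.le]; exact fun t ht => ⟨ht.1, ht.2.trans_lt hx.2⟩
  rw [Real.volume_Ioc] at hleft
  rw [Real.volume_Ioo] at hright
  rw [← hsplit, lintegral_union measurableSet_Ioo hdisj, lintegral_union measurableSet_Ioo hdisj]
  calc _ ≤ _ := add_le_add hleft hright
    _ = _ := by rw [show m - a = (b - a) / 2 by ring, show b - m = (b - a) / 2 by ring]; ring

lemma Ioc_inter_Ioo_eq_left {a b x : ℝ} (hx : x < b) : Ioc a x ∩ Ioo a b = Ioc a x :=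
  inter_eq_left.2 fun _ ht => ⟨ht.1, ht.2.trans_lt hx⟩

lemma setIntegral_Ioc_inter_Ioo_sub_eq_intervalIntegral {g : ℝ → ℝ} {a b x y : ℝ}
    (hg : IntegrableOn g (Ioo a b)) (hx : x ∈ Ioo a b) (hy : y ∈ Ioo a b) :
    (∫ t in Ioc a x ∩ Ioo a b, g t) - ∫ t in Ioc a y ∩ Ioo a b, g t = ∫ t in y..x, g t := by
  have hint : ∀ z ∈ Ioo a b, IntervalIntegrable g volume a z := fun z hz =>
    (intervalIntegrable_iff_integrableOn_Ioc_of_le hz.1.le).2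
      (hg.mono_set (Ioc_inter_Ioo_eq_left hz.2 ▸ inter_subset_right))
  rw [Ioc_inter_Ioo_eq_left hx.2, Ioc_inter_Ioo_eq_left hy.2,
    ← intervalIntegral.integral_of_le hx.1.le, ← intervalIntegral.integral_of_le hy.1.le,
    intervalIntegral.integral_interval_sub_left (hint x hx) (hint y hy)]

lemma hardyA_one_const_le (a b γ δ : ℝ) :
    hardyA 1 a (Ioo a b) (fun _ => δ) (fun _ => γ)
      ≤ ENNReal.ofReal (|γ| * |δ| * ((b - a) / 2)) := by
  refine iSup₂_le fun f ⟨hf, hf_norm⟩ => ?_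
  set m := (a + b) / 2 with hm
  refine iInf_le_of_le (∫ t in Ioc a m ∩ Ioo a b, δ * f t) ?_
  have hδf : IntegrableOn (fun t => δ * f t) (Ioo a b) :=
    (memLp_one_iff_integrable.1 hf).const_mul δ
  rw [eLpNorm_one_eq_lintegral_enorm] at hf_norm ⊢
  calc ∫⁻ x in Ioo a b,
        ‖γ * ((∫ t in Ioc a x ∩ Ioo a b, δ * f t) - ∫ t in Ioc a m ∩ Ioo a b, δ * f t)‖ₑ
      = ∫⁻ x in Ioo a b, ‖γ‖ₑ * ‖∫ t in m..x, δ * f t‖ₑ := by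
        refine setLIntegral_congr_fun measurableSet_Ioo fun x hx => ?_
        have hmI : m ∈ Ioo a b := ⟨by linarith [hx.1, hx.2], by linarith [hx.1, hx.2]⟩
        rw [enorm_mul, setIntegral_Ioc_inter_Ioo_sub_eq_intervalIntegral hδf hx hmI]
    _ = ‖γ‖ₑ * ∫⁻ x in Ioo a b, ‖∫ t in m..x, δ * f t‖ₑ := lintegral_const_mul' _ _ enorm_ne_top
    _ ≤ ‖γ‖ₑ * (ENNReal.ofReal ((b - a) / 2) * ∫⁻ t in Ioo a b, ‖δ * f t‖ₑ) := by
        gcongr; exact setLIntegral_enorm_intervalIntegral_midpoint_le _ a b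
    _ = ‖γ‖ₑ * ‖δ‖ₑ * ENNReal.ofReal ((b - a) / 2) * ∫⁻ t in Ioo a b, ‖f t‖ₑ := by
        simp only [enorm_mul]
        rw [lintegral_const_mul' _ _ enorm_ne_top]
        ring
    _ ≤ ‖γ‖ₑ * ‖δ‖ₑ * ENNReal.ofReal ((b - a) / 2) * 1 := by gcongr
    _ = ENNReal.ofReal (|γ| * |δ| * ((b - a) / 2)) := by
        rw [mul_one, ENNReal.ofReal_mul (by positivity), ENNReal.ofReal_mul (abs_nonneg _),
          Real.enorm_eq_ofReal_abs, Real.enorm_eq_ofReal_abs]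

lemma memLp_and_eLpNorm_le_one_indicator_inv {X : Type*} [MeasurableSpace X] {μ : Measure X}
    {J : Set X} {w : ℝ} (hJ : MeasurableSet J) (hμJ : μ J = ENNReal.ofReal w) (hw : 0 < w) :
    MemLp (J.indicator fun _ => w⁻¹) 1 μ ∧ eLpNorm (J.indicator fun _ => w⁻¹) 1 μ ≤ 1 := by
  refine ⟨memLp_indicator_const 1 hJ _ (Or.inr (hμJ ▸ ofReal_ne_top)), ?_⟩
  rw [eLpNorm_indicator_const hJ one_ne_zero one_ne_top, hμJ, Real.enorm_eq_ofReal_abs,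
    abs_of_pos (inv_pos.2 hw), toReal_one, div_one, rpow_one, ← ENNReal.ofReal_mul (by positivity),
    inv_mul_cancel₀ hw.ne', ofReal_one]

lemma enorm_mul_ofReal_le_lintegral_enorm_sub (F : ℝ → ℝ) {a b ℓ H : ℝ} (hℓ : 0 ≤ ℓ)
    (hℓb : 2 * ℓ ≤ b - a)
    (h_left : ∀ x ∈ Ioo a (a + ℓ), F x = 0) (h_right : ∀ x ∈ Ioo (b - ℓ) b, F x = H) (c : ℝ) :
    ‖H‖ₑ * ENNReal.ofReal ℓ ≤ ∫⁻ x in Ioo a b, ‖F x - c‖ₑ := by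
  have hdisj : Disjoint (Ioo a (a + ℓ)) (Ioo (b - ℓ) b) :=
    disjoint_left.2 fun x hx hx' => by linarith [hx.2, hx'.1]
  have hsub : Ioo a (a + ℓ) ∪ Ioo (b - ℓ) b ⊆ Ioo a b :=
    union_subset (Ioo_subset_Ioo le_rfl (by linarith)) (Ioo_subset_Ioo (by linarith) le_rfl)
  calc ‖H‖ₑ * ENNReal.ofReal ℓ ≤ (‖0 - c‖ₑ + ‖H - c‖ₑ) * ENNReal.ofReal ℓ := by
        gcongr
        calc ‖H‖ₑ = ‖-(0 - c) + (H - c)‖ₑ := by ring_nf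
          _ ≤ ‖-(0 - c)‖ₑ + ‖H - c‖ₑ := enorm_add_le _ _
          _ = ‖0 - c‖ₑ + ‖H - c‖ₑ := by rw [enorm_neg]
    _ = ∫⁻ x in Ioo a (a + ℓ) ∪ Ioo (b - ℓ) b, ‖F x - c‖ₑ := by
        have h_left' : ∫⁻ x in Ioo a (a + ℓ), ‖F x - c‖ₑ = ‖0 - c‖ₑ * ENNReal.ofReal ℓ := by
          rw [setLIntegral_congr_fun measurableSet_Ioo fun x hx => by rw [h_left x hx],
            setLIntegral_const, Real.volume_Ioo, add_sub_cancel_left]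
        have h_right' : ∫⁻ x in Ioo (b - ℓ) b, ‖F x - c‖ₑ = ‖H - c‖ₑ * ENNReal.ofReal ℓ := by
          rw [setLIntegral_congr_fun measurableSet_Ioo fun x hx => by rw [h_right x hx],
            setLIntegral_const, Real.volume_Ioo, sub_sub_self]
        rw [lintegral_union measurableSet_Ioo hdisj, h_left', h_right', add_mul]
    _ ≤ ∫⁻ x in Ioo a b, ‖F x - c‖ₑ := lintegral_mono_set hsub

lemma ofReal_le_hardyA_one_of_margin (a b ℓ γ : ℝ) (u : ℝ → ℝ) (hℓ : 0 ≤ ℓ)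
    (hℓb : 2 * ℓ < b - a) :
    ENNReal.ofReal (|γ| * (ℓ / (b - a - 2 * ℓ)) * ∫ t in Ioo (a + ℓ) (b - ℓ), u t)
      ≤ hardyA 1 a (Ioo a b) u (fun _ => γ) := by
  set J := Ioo (a + ℓ) (b - ℓ)
  set w := b - a - 2 * ℓ with hw_def
  have hw : 0 < w := by linarith
  set H := (∫ t in J, u t) * w⁻¹ with hH
  have hJI : J ⊆ Ioo a b := Ioo_subset_Ioo (by linarith) (by linarith)
  have hvolJ : volume.restrict (Ioo a b) J = ENNReal.ofReal w := by
    rw [Measure.restrict_apply measurableSet_Ioo, inter_eq_self_of_subset_left hJI,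
      Real.volume_Ioo, hw_def]
    ring_nf
  set f : ℝ → ℝ := J.indicator fun _ => w⁻¹ with hf
  have hF : ∀ x, ∫ t in Ioc a x ∩ Ioo a b, u t * f t
      = (∫ t in Ioc a x ∩ Ioo a b ∩ J, u t) * w⁻¹ := fun x => by
    simp only [hf, ← indicator_mul_right]
    rw [setIntegral_indicator measurableSet_Ioo, integral_mul_const]
  have hF_left : ∀ x ∈ Ioo a (a + ℓ), ∫ t in Ioc a x ∩ Ioo a b, u t * f t = 0 := fun x hx => by
    rw [hF, inter_assoc, inter_eq_right.2 hJI,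
      disjoint_iff_inter_eq_empty.1 (disjoint_left.2 fun t ht htJ => ?_)]
    · simp
    · linarith [ht.2, htJ.1, hx.2]
  have hF_right : ∀ x ∈ Ioo (b - ℓ) b, ∫ t in Ioc a x ∩ Ioo a b, u t * f t = H := fun x hx => by
    rw [hF, inter_eq_right.2 fun t ht =>
      show t ∈ Ioc a x ∩ Ioo a b from ⟨⟨(hJI ht).1, by linarith [ht.2, hx.1]⟩, hJI ht⟩]
  refine le_iSup₂_of_le f (memLp_and_eLpNorm_le_one_indicator_inv measurableSet_Ioo hvolJ hw)
    (le_iInf fun c => ?_)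
  rw [eLpNorm_one_eq_lintegral_enorm]
  calc ENNReal.ofReal (|γ| * (ℓ / w) * ∫ t in J, u t)
      ≤ ‖γ‖ₑ * (‖H‖ₑ * ENNReal.ofReal ℓ) := by
        rw [Real.enorm_eq_ofReal_abs, Real.enorm_eq_ofReal_abs, ← ENNReal.ofReal_mul (abs_nonneg _),
          ← ENNReal.ofReal_mul (abs_nonneg _)]
        refine ENNReal.ofReal_le_ofReal ?_
        calc |γ| * (ℓ / w) * ∫ t in J, u t = |γ| * (H * ℓ) := by rw [hH]; ring
          _ ≤ |γ| * (|H| * ℓ) := by gcongr; exact le_abs_self H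
    _ ≤ ‖γ‖ₑ * ∫⁻ x in Ioo a b, ‖(∫ t in Ioc a x ∩ Ioo a b, u t * f t) - c‖ₑ := by
        gcongr
        exact enorm_mul_ofReal_le_lintegral_enorm_sub _ hℓ hℓb.le hF_left hF_right c
    _ = ∫⁻ x in Ioo a b, ‖γ * ((∫ t in Ioc a x ∩ Ioo a b, u t * f t) - c)‖ₑ := by
        simp only [enorm_mul]
        exact (lintegral_const_mul' _ _ enorm_ne_top).symm

lemma measureReal_mul_sub_le_setIntegral {X : Type*} [MeasurableSpace X] {μ : Measure X}
    {s t : Set X} {u : X → ℝ} {δ : ℝ} (hs : MeasurableSet s) (hμs : μ s ≠ ∞) (hts : t ⊆ s)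
    (hu : IntegrableOn u s μ) (hu_le : ∀ x ∈ s, u x ≤ δ) :
    μ.real t * δ - ∫ x in s, (δ - u x) ∂μ ≤ ∫ x in t, u x ∂μ := by
  have hδ : IntegrableOn (fun _ => δ) s μ := integrableOn_const hμs
  have h : ∫ x in t, (δ - u x) ∂μ ≤ ∫ x in s, (δ - u x) ∂μ := setIntegral_mono_set (hδ.sub hu)
    (ae_restrict_of_forall_mem hs fun x hx => sub_nonneg.2 (hu_le x hx)) hts.eventuallyLE
  rw [integral_sub (hδ.mono_set hts) (hu.mono_set hts), setIntegral_const, smul_eq_mul] at h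
  linarith

lemma ofReal_le_hardyA_one_of_le_const (a b γ δ α : ℝ) (hab : a < b) (hα : 1 < α) (u : ℝ → ℝ)
    (hu : IntegrableOn u (Ioo a b)) (hu_le : ∀ t ∈ Ioo a b, u t ≤ δ) :
    ENNReal.ofReal (|γ| * ((α - 1) / 2) * (δ * (b - a) / α - ∫ t in Ioo a b, (δ - u t)))
      ≤ hardyA 1 a (Ioo a b) u (fun _ => γ) := by
  set ℓ := (b - a) * (α - 1) / (2 * α) with hℓ
  have hα0 : α ≠ 0 := by linarith
  have hL : b - a ≠ 0 := by linarith
  have hwidth : b - a - 2 * ℓ = (b - a) / α := by rw [hℓ]; field_simp; ring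
  have hℓ_nonneg : 0 ≤ ℓ := div_nonneg (mul_nonneg (by linarith) (by linarith)) (by linarith)
  have hℓb : 2 * ℓ < b - a := by
    have : 0 < (b - a) / α := div_pos (by linarith) (by linarith)
    linarith
  have hJI : Ioo (a + ℓ) (b - ℓ) ⊆ Ioo a b := Ioo_subset_Ioo (by linarith) (by linarith)
  have hmass := measureReal_mul_sub_le_setIntegral measurableSet_Ioo (by simp) hJI hu hu_le
  rw [Real.volume_real_Ioo_of_le (by linarith),
    show (b - ℓ - (a + ℓ)) * δ = δ * (b - a) / α by
      rw [show b - ℓ - (a + ℓ) = b - a - 2 * ℓ by ring, hwidth]; ring]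
    at hmass
  refine (ENNReal.ofReal_le_ofReal ?_).trans
    (ofReal_le_hardyA_one_of_margin a b ℓ γ u hℓ_nonneg hℓb)
  rw [hwidth, show ℓ / ((b - a) / α) = (α - 1) / 2 by rw [hℓ]; field_simp]
  exact mul_le_mul_of_nonneg_left hmass (mul_nonneg (abs_nonneg γ) (by linarith))

/-- (Case `p = 1`.) For `0 ≤ u_s ≤ δ` on a bounded interval `I = (a,b)` and
any `α > 1`,
`A(I; δ, γ) − A(I; u_s, γ) ≤ (α/2) ∫_I |γ|(δ − u_s) dt + |γ| δ |I| / (2α)`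
(stated additively since values lie in `ℝ≥0∞`). -/
theorem stmt_9 (a b : ℝ) (hab : a < b) (γ δ α : ℝ) (hα : 1 < α)
    (us : ℝ → ℝ) (h : ∀ t ∈ Set.Ioo a b, 0 ≤ us t ∧ us t ≤ δ)
    (hint : IntegrableOn us (Set.Ioo a b)) :
    hardyA 1 a (Set.Ioo a b) (fun _ => δ) (fun _ => γ)
      ≤ hardyA 1 a (Set.Ioo a b) us (fun _ => γ)
        + ENNReal.ofReal (α / 2 * ∫ t in Set.Ioo a b, |γ| * (δ - us t))
        + ENNReal.ofReal (|γ| * δ * (b - a) / (2 * α)) := by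
  have hδ : 0 ≤ δ := by
    obtain ⟨hu_nonneg, hu_le⟩ := h ((a + b) / 2) ⟨by linarith, by linarith⟩
    exact hu_nonneg.trans hu_le
  set D := ∫ t in Ioo a b, (δ - us t)
  have hD : 0 ≤ D := setIntegral_nonneg measurableSet_Ioo fun t ht => sub_nonneg.2 (h t ht).2
  set lower := |γ| * ((α - 1) / 2) * (δ * (b - a) / α - D) with hlower
  have hsum : lower + α / 2 * (|γ| * D) + |γ| * δ * (b - a) / (2 * α)
      = |γ| * |δ| * ((b - a) / 2) + |γ| * D / 2 := by
    have hα0 : α ≠ 0 := by linarith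
    rw [hlower, abs_of_nonneg hδ]; field_simp; ring
  rw [integral_const_mul]
  calc hardyA 1 a (Ioo a b) (fun _ => δ) (fun _ => γ)
      ≤ ENNReal.ofReal (|γ| * |δ| * ((b - a) / 2)) := hardyA_one_const_le a b γ δ
    _ ≤ ENNReal.ofReal (lower + α / 2 * (|γ| * D) + |γ| * δ * (b - a) / (2 * α)) :=
        ENNReal.ofReal_le_ofReal (by rw [hsum]; linarith [mul_nonneg (abs_nonneg γ) hD])
    _ ≤ ENNReal.ofReal lower + ENNReal.ofReal (α / 2 * (|γ| * D))
          + ENNReal.ofReal (|γ| * δ * (b - a) / (2 * α)) :=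
        ofReal_add_le.trans (by gcongr; exact ofReal_add_le)
    _ ≤ _ := by
        gcongr
        exact ofReal_le_hardyA_one_of_le_const a b γ δ α hab hα us hint fun t ht => (h t ht).2
end

section
/- Let T : X → X be a bounded linear operator on a Banach space X, and suppose φ₁, …, φ_M ∈ X with ‖φ_i‖ = 1 have pairwise disjoint supports (in an L^p(Γ) setting: supp φ_i ⊆ Γ_i with Γ_i non-overlapping subtrees), and suppose that for each i and every scalar α, ‖T φ_i − α v‖_{p,Γ_i} > ε for a fixed function v. If moreover for every finite linear combination φ = Σ λ_i φ_i the restriction of Tφ to Γ_i equals λ_i T φ_i + η_i v for some scalar η_i, then the M-th approximation number satisfies a_M(T) ≥ ε. -/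
/-!
If `F` has rank `< M`, some nonzero combination `u = ∑ λᵢ φᵢ` lies in the kernel of `F`.
On `Γᵢ` the function `u` is `λᵢ φᵢ`, of norm `|λᵢ|`, while `T u = λᵢ (T φᵢ - α v)` with
`α = -ηᵢ / λᵢ`, so `‖T u‖_{p,Γᵢ} ≥ ε ‖u‖_{p,Γᵢ}`. Since `u` lives on the disjoint union of the
`Γᵢ`, these bounds add up (in `ℓ^p`, or as a supremum when `p = ∞`) to
`‖(T - F) u‖ = ‖T u‖ ≥ ε ‖u‖`.
-/

open MeasureTheory ENNReal

/-- The `m`-th approximation number of a bounded operator `T`: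
`a_m(T) = inf {‖T − P‖ : rank P < m}`. -/
noncomputable def approxNum {E F : Type*} [NormedAddCommGroup E] [NormedSpace ℝ E]
    [NormedAddCommGroup F] [NormedSpace ℝ F] (T : E →L[ℝ] F) (m : ℕ) : ℝ :=
  sInf {c : ℝ | ∃ P : E →L[ℝ] F, LinearMap.rank (P : E →ₗ[ℝ] F) < m ∧ ‖T - P‖ = c}

theorem le_approxNum {E F : Type*} [NormedAddCommGroup E] [NormedSpace ℝ E]
    [NormedAddCommGroup F] [NormedSpace ℝ F] {T : E →L[ℝ] F} {m : ℕ} {ε : ℝ} (hm : 0 < m)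
    (h : ∀ P : E →L[ℝ] F, LinearMap.rank (P : E →ₗ[ℝ] F) < m → ε ≤ ‖T - P‖) :
    ε ≤ approxNum T m := by
  refine le_csInf ⟨‖T - 0‖, 0, ?_, rfl⟩ ?_
  · simpa using hm
  · rintro _ ⟨P, hP, rfl⟩
    exact h P hP

theorem LinearMap.exists_ne_zero_apply_sum_smul_eq_zero {K V W : Type*} [DivisionRing K]
    [AddCommGroup V] [Module K V] [AddCommGroup W] [Module K W] (P : V →ₗ[K] W) {m : ℕ}
    (hP : P.rank < m) (φ : Fin m → V) : ∃ c : Fin m → K, c ≠ 0 ∧ P (∑ i, c i • φ i) = 0 := by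
  set L := P ∘ₗ Fintype.linearCombination K φ
  have hL : ¬ Function.Injective L := fun hinj => by
    have hrank : L.rank = m := by
      simpa [rank_fin_fun] using lift_rank_range_of_injective L hinj
    exact (hrank ▸ LinearMap.rank_comp_le_left _ P).not_gt hP
  rw [injective_iff_map_eq_zero] at hL
  push Not at hL
  obtain ⟨c, hLc, hc⟩ := hL
  exact ⟨c, hc, by simpa [L, Fintype.linearCombination_apply] using hLc⟩

section eLpNormRestrict

variable {Ω ι E F : Type*} [MeasurableSpace Ω] [Countable ι] {μ : Measure Ω} {p : ℝ≥0∞}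
  [NormedAddCommGroup E] [NormedAddCommGroup F] {s : ι → Set Ω}

theorem eLpNorm_restrict_iUnion_rpow (hp0 : p ≠ 0) (hptop : p ≠ ∞)
    (hs : ∀ i, MeasurableSet (s i)) (hd : Pairwise (Function.onFun Disjoint s)) (f : Ω → E) :
    eLpNorm f p (μ.restrict (⋃ i, s i)) ^ p.toReal
      = ∑' i, eLpNorm f p (μ.restrict (s i)) ^ p.toReal := by
  have hq : 0 < p.toReal := ENNReal.toReal_pos hp0 hptop
  simp_rw [eLpNorm_eq_eLpNorm' hp0 hptop, ← lintegral_rpow_enorm_eq_rpow_eLpNorm' hq]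
  exact lintegral_iUnion hs hd _

theorem eLpNorm_top_restrict_iUnion (f : Ω → E) :
    eLpNorm f ∞ (μ.restrict (⋃ i, s i)) = ⨆ i, eLpNorm f ∞ (μ.restrict (s i)) := by
  refine le_antisymm ?_ (iSup_le fun i =>
    eLpNorm_mono_measure f (Measure.restrict_mono (Set.subset_iUnion s i) le_rfl))
  simp only [eLpNorm_exponent_top, eLpNormEssSup]
  refine essSup_le_of_ae_le _ ((ae_restrict_iUnion_iff s _).2 fun i => ?_)
  filter_upwards [ae_le_essSup (μ := μ.restrict (s i)) fun x => ‖f x‖ₑ] with x hx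
  exact hx.trans (le_iSup (fun i => essSup (fun x => ‖f x‖ₑ) (μ.restrict (s i))) i)

theorem mul_eLpNorm_restrict_iUnion_le (hs : ∀ i, MeasurableSet (s i))
    (hd : Pairwise (Function.onFun Disjoint s)) {f : Ω → F} {g : Ω → E} {c : ℝ≥0∞}
    (h : ∀ i, c * eLpNorm g p (μ.restrict (s i)) ≤ eLpNorm f p (μ.restrict (s i))) :
    c * eLpNorm g p (μ.restrict (⋃ i, s i)) ≤ eLpNorm f p (μ.restrict (⋃ i, s i)) := by
  rcases eq_or_ne p 0 with rfl | hp0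
  · simp
  rcases eq_or_ne p ∞ with rfl | hptop
  · rw [eLpNorm_top_restrict_iUnion, eLpNorm_top_restrict_iUnion, ENNReal.mul_iSup]
    exact iSup_mono h
  have hq : 0 < p.toReal := ENNReal.toReal_pos hp0 hptop
  rw [← ENNReal.rpow_le_rpow_iff hq, ENNReal.mul_rpow_of_nonneg _ _ hq.le,
    eLpNorm_restrict_iUnion_rpow hp0 hptop hs hd, eLpNorm_restrict_iUnion_rpow hp0 hptop hs hd,
    ← ENNReal.tsum_mul_left]
  refine ENNReal.tsum_le_tsum fun i => ?_
  rw [← ENNReal.mul_rpow_of_nonneg _ _ hq.le]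
  exact ENNReal.rpow_le_rpow (h i) hq.le

theorem eLpNorm_restrict_eq_of_ae_eq_zero_compl {t : Set Ω} (ht : MeasurableSet t) {f : Ω → E}
    (hf : f =ᵐ[μ.restrict tᶜ] 0) : eLpNorm f p (μ.restrict t) = eLpNorm f p μ := by
  rw [← eLpNorm_indicator_eq_eLpNorm_restrict ht]
  exact eLpNorm_congr_ae (indicator_ae_eq_of_restrict_compl_ae_eq_zero ht hf)

end eLpNormRestrict

section LpDisjointSupports

variable {Ω ι : Type*} [MeasurableSpace Ω] [Fintype ι] {μ : Measure Ω} {p : ℝ≥0∞}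
  {Γ : ι → Set Ω} {φ : ι → Lp ℝ p μ}

theorem coeFn_sum_smul_ae_eq_restrict (hdisj : Pairwise (Function.onFun Disjoint Γ))
    (hsupp : ∀ i, φ i =ᵐ[μ.restrict (Γ i)ᶜ] 0) (c : ι → ℝ) (i : ι) :
    ⇑(∑ j, c j • φ j) =ᵐ[μ.restrict (Γ i)] c i • ⇑(φ i) := by
  have hoff : ∀ j, ∀ᵐ x ∂μ.restrict (Γ i), j ≠ i → φ j x = 0 := fun j => by
    rcases eq_or_ne j i with rfl | hji
    · exact .of_forall fun _ h => absurd rfl h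
    · have hsub : Γ i ⊆ (Γ j)ᶜ := Set.subset_compl_iff_disjoint_left.2 (hdisj hji)
      filter_upwards [(hsupp j).filter_mono (ae_mono (Measure.restrict_mono hsub le_rfl))]
        with x hx _ using hx
  filter_upwards [ae_restrict_of_ae (Lp.coeFn_finsetSum Finset.univ fun j => c j • φ j),
    ae_all_iff.2 fun j => ae_restrict_of_ae (Lp.coeFn_smul (c j) (φ j)),
    ae_all_iff.2 hoff] with x hsum hsmul hzero
  rw [hsum, Finset.sum_apply, Finset.sum_eq_single i (fun j _ hji => by
    simp [hsmul j, hzero j hji]) (by simp)]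
  exact hsmul i

theorem coeFn_sum_smul_ae_eq_zero_compl_iUnion (hsupp : ∀ i, φ i =ᵐ[μ.restrict (Γ i)ᶜ] 0)
    (c : ι → ℝ) : ⇑(∑ j, c j • φ j) =ᵐ[μ.restrict (⋃ i, Γ i)ᶜ] 0 := by
  have hoff : ∀ j, φ j =ᵐ[μ.restrict (⋃ i, Γ i)ᶜ] 0 := fun j =>
    (hsupp j).filter_mono (ae_mono (Measure.restrict_mono
      (Set.compl_subset_compl.2 (Set.subset_iUnion Γ j)) le_rfl))
  filter_upwards [ae_restrict_of_ae (Lp.coeFn_finsetSum Finset.univ fun j => c j • φ j),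
    ae_all_iff.2 fun j => ae_restrict_of_ae (Lp.coeFn_smul (c j) (φ j)),
    ae_all_iff.2 hoff] with x hsum hsmul hzero
  rw [hsum, Finset.sum_apply, Pi.zero_apply]
  exact Finset.sum_eq_zero fun j _ => by
    rw [hsmul j, Pi.smul_apply, hzero j, Pi.zero_apply, smul_zero]

theorem eLpNorm_sum_smul_restrict [Fact (1 ≤ p)] (hΓ : ∀ i, MeasurableSet (Γ i))
    (hdisj : Pairwise (Function.onFun Disjoint Γ)) (hsupp : ∀ i, φ i =ᵐ[μ.restrict (Γ i)ᶜ] 0)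
    (c : ι → ℝ) {i : ι} (hnorm : ‖φ i‖ = 1) :
    eLpNorm ⇑(∑ j, c j • φ j) p (μ.restrict (Γ i)) = ‖c i‖ₑ := by
  rw [eLpNorm_congr_ae (coeFn_sum_smul_ae_eq_restrict hdisj hsupp c i), eLpNorm_const_smul,
    eLpNorm_restrict_eq_of_ae_eq_zero_compl (hΓ i) (hsupp i), ← Lp.enorm_def,
    ← ofReal_norm (φ i), hnorm, ENNReal.ofReal_one, mul_one]

theorem sum_smul_ne_zero [Fact (1 ≤ p)] (hΓ : ∀ i, MeasurableSet (Γ i))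
    (hdisj : Pairwise (Function.onFun Disjoint Γ)) (hsupp : ∀ i, φ i =ᵐ[μ.restrict (Γ i)ᶜ] 0)
    (hnorm : ∀ i, ‖φ i‖ = 1) {c : ι → ℝ} (hc : c ≠ 0) : ∑ j, c j • φ j ≠ 0 := by
  obtain ⟨i, hi⟩ := Function.ne_iff.1 hc
  intro h0
  have h := eLpNorm_sum_smul_restrict hΓ hdisj hsupp c (hnorm i)
  rw [h0, eLpNorm_congr_ae (ae_restrict_of_ae (Lp.coeFn_zero ℝ p μ)), eLpNorm_zero] at h
  exact hi (enorm_eq_zero.1 h.symm)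

theorem enorm_mul_le_eLpNorm_mul_add_mul {ν : Measure Ω} {f v : Ω → ℝ} {δ : ℝ≥0∞}
    (hfar : ∀ α : ℝ, δ ≤ eLpNorm (fun x => f x - α * v x) p ν) (a η : ℝ) :
    ‖a‖ₑ * δ ≤ eLpNorm (fun x => a * f x + η * v x) p ν := by
  rcases eq_or_ne a 0 with rfl | ha
  · simp
  have hfun : (fun x => a * f x + η * v x) = a • fun x => f x - (-η / a) * v x := by
    ext x
    simp only [Pi.smul_apply, smul_eq_mul]
    field_simp
    ring
  rw [hfun, eLpNorm_const_smul]
  gcongr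
  exact hfar _

theorem mul_enorm_le_enorm_apply_sum_smul [Fact (1 ≤ p)] (T : Lp ℝ p μ →L[ℝ] Lp ℝ p μ)
    (v : Ω → ℝ) (hΓ : ∀ i, MeasurableSet (Γ i)) (hdisj : Pairwise (Function.onFun Disjoint Γ))
    (hnorm : ∀ i, ‖φ i‖ = 1) (hsupp : ∀ i, φ i =ᵐ[μ.restrict (Γ i)ᶜ] 0) {δ : ℝ≥0∞}
    (hfar : ∀ i (α : ℝ), δ ≤ eLpNorm (fun x => T (φ i) x - α * v x) p (μ.restrict (Γ i)))
    (c : ι → ℝ) (hrestrict : ∀ i, ∃ η : ℝ,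
      ⇑(T (∑ j, c j • φ j)) =ᵐ[μ.restrict (Γ i)] fun x => c i * T (φ i) x + η * v x) :
    δ * ‖∑ j, c j • φ j‖ₑ ≤ ‖T (∑ j, c j • φ j)‖ₑ := by
  have hpiece : ∀ i, δ * eLpNorm ⇑(∑ j, c j • φ j) p (μ.restrict (Γ i))
      ≤ eLpNorm (T (∑ j, c j • φ j)) p (μ.restrict (Γ i)) := fun i => by
    obtain ⟨η, hη⟩ := hrestrict i
    rw [eLpNorm_sum_smul_restrict hΓ hdisj hsupp c (hnorm i), eLpNorm_congr_ae hη, mul_comm]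
    exact enorm_mul_le_eLpNorm_mul_add_mul (hfar i) (c i) η
  rw [Lp.enorm_def, Lp.enorm_def, ← eLpNorm_restrict_eq_of_ae_eq_zero_compl
    (MeasurableSet.iUnion hΓ) (coeFn_sum_smul_ae_eq_zero_compl_iUnion hsupp c)]
  exact (mul_eLpNorm_restrict_iUnion_le hΓ hdisj hpiece).trans
    (eLpNorm_mono_measure _ Measure.restrict_le_self)

end LpDisjointSupports

theorem stmt_11_general {Ω : Type*} [MeasurableSpace Ω] (μ : Measure Ω) (p : ℝ≥0∞) [Fact (1 ≤ p)]
    (T : Lp ℝ p μ →L[ℝ] Lp ℝ p μ) (v : Ω → ℝ) (M : ℕ) (hM : 0 < M)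
    (Γ : Fin M → Set Ω) (hΓ : ∀ i, MeasurableSet (Γ i))
    (hdisj : Pairwise fun i j => Disjoint (Γ i) (Γ j))
    (φ : Fin M → Lp ℝ p μ) (hnorm : ∀ i, ‖φ i‖ = 1)
    (hsupp : ∀ i, (φ i : Ω → ℝ) =ᵐ[μ.restrict (Γ i)ᶜ] 0)
    (ε : ℝ)
    (hfar : ∀ (i : Fin M) (α : ℝ),
      ENNReal.ofReal ε < eLpNorm (fun x => (T (φ i) : Ω → ℝ) x - α * v x) p (μ.restrict (Γ i)))
    (hrestrict : ∀ (lam : Fin M → ℝ) (i : Fin M), ∃ η : ℝ,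
      (T (∑ j, lam j • φ j) : Ω → ℝ)
        =ᵐ[μ.restrict (Γ i)] fun x => lam i * (T (φ i) : Ω → ℝ) x + η * v x) :
    ε ≤ approxNum T M := by
  refine le_approxNum hM fun P hP => ?_
  obtain ⟨c, hc, hPc⟩ := LinearMap.exists_ne_zero_apply_sum_smul_eq_zero _ hP φ
  set u := ∑ j, c j • φ j
  have hu : ‖u‖ₑ ≠ 0 := enorm_ne_zero.2 (sum_smul_ne_zero hΓ hdisj hsupp hnorm hc)
  have hTu : ENNReal.ofReal ε * ‖u‖ₑ ≤ ‖T - P‖ₑ * ‖u‖ₑ :=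
    calc ENNReal.ofReal ε * ‖u‖ₑ ≤ ‖T u‖ₑ := mul_enorm_le_enorm_apply_sum_smul T v hΓ hdisj
          hnorm hsupp (fun i α => (hfar i α).le) c (hrestrict c)
      _ = ‖(T - P) u‖ₑ := by
          rw [sub_apply, ← ContinuousLinearMap.coe_coe P, hPc, sub_zero]
      _ ≤ ‖T - P‖ₑ * ‖u‖ₑ := (T - P).le_opENorm u
  rwa [ENNReal.mul_le_mul_iff_left hu enorm_ne_top, ← ofReal_norm,
    ENNReal.ofReal_le_ofReal_iff (norm_nonneg _)] at hTu

/-- (Abstract form of Lemma 3.17.) Let `T` be a bounded operator on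
`L^p(μ)`, `φ₁, …, φ_M` norm-one functions with supports in pairwise disjoint sets `Γ_i`, such
that `‖Tφ_i − α v‖_{p,Γ_i} > ε` for all scalars `α`, and such that on each `Γ_i` the image of
any linear combination `Σ λ_j φ_j` equals `λ_i Tφ_i + η_i v` for some scalar `η_i`. Then
`a_M(T) ≥ ε`. -/
theorem stmt_11 {Ω : Type*} [MeasurableSpace Ω] (μ : Measure Ω) (p : ℝ≥0∞) [Fact (1 ≤ p)]
    (T : Lp ℝ p μ →L[ℝ] Lp ℝ p μ) (v : Ω → ℝ) (M : ℕ) (hM : 0 < M)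
    (Γ : Fin M → Set Ω) (hΓ : ∀ i, MeasurableSet (Γ i))
    (hdisj : Pairwise fun i j => Disjoint (Γ i) (Γ j))
    (φ : Fin M → Lp ℝ p μ) (hnorm : ∀ i, ‖φ i‖ = 1)
    (hsupp : ∀ i, (φ i : Ω → ℝ) =ᵐ[μ.restrict (Γ i)ᶜ] 0)
    (ε : ℝ) (hε : 0 ≤ ε)
    (hfar : ∀ (i : Fin M) (α : ℝ),
      ENNReal.ofReal ε < eLpNorm (fun x => (T (φ i) : Ω → ℝ) x - α * v x) p (μ.restrict (Γ i)))
    (hrestrict : ∀ (lam : Fin M → ℝ) (i : Fin M), ∃ η : ℝ,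
      (T (∑ j, lam j • φ j) : Ω → ℝ)
        =ᵐ[μ.restrict (Γ i)] fun x => lam i * (T (φ i) : Ω → ℝ) x + η * v x) :
    ε ≤ approxNum T M :=
  stmt_11_general μ p T v M hM Γ hΓ hdisj φ hnorm hsupp ε hfar hrestrict
end

section
/- Let 1 < p ≤ ∞, let a, b be points of a tree Γ (or interval), and let T_{a,K} f(x) = v(x) χ_K(x) ∫_a^x u f χ_K dt, T_{b,K} correspondingly. Let S be the quotient map of L^p(K) by the span of v, and define A(K) = ‖S T_{a,K}‖. Then A(K) is independent of the base point a: ‖S T_{a,K}‖ = ‖S T_{b,K}‖ for all a, b. -/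
/-!
Moving the base point from `a` to `b` only flips the sign of `f` on the path between them:
since `Ι b x = Ι a b ∆ Ι a x`, we get `∫_{Ι b x} u f = ∫_{Ι a x} u (U f) + ∫_{Ι a b} u f`, where
`U f = -f` on `Ι a b` and `U f = f` elsewhere. The map `U` preserves `L^p(K)` and its norm, and the
constant `∫_{Ι a b} u f` only shifts `α` in the infimum, so `A_b ≤ A_a`; exchanging `a` and `b`
gives equality.
-/

open MeasureTheory ENNReal

/-- The quotient-norm functional `A(K) = ‖S ∘ T_{a,K}‖` of the Hardy operator with base
point `a` on the set `S ⊆ ℝ`, where the integral `∫_a^x` is the (unsigned) integral over the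
path from `a` to `x` (the unordered interval `uIoc a x`), intersected with `K`:
`A = sup_{f ∈ L^p(K), ‖f‖_p ≤ 1} inf_{α ∈ ℝ} ‖v·(∫_{uIoc a ·} u f − α)‖_{p,K}`. -/
noncomputable def hardyABase (p : ℝ≥0∞) (a : ℝ) (K : Set ℝ) (u v : ℝ → ℝ) : ℝ≥0∞ :=
  ⨆ (f : ℝ → ℝ) (_ : MemLp f p (volume.restrict K) ∧
      eLpNorm f p (volume.restrict K) ≤ 1),
    ⨅ α : ℝ, eLpNorm (fun x => v x * ((∫ t in Set.uIoc a x ∩ K, u t * f t) - α)) p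
      (volume.restrict K)

open scoped Interval symmDiff

lemma Set.uIoc_symmDiff_uIoc {α : Type*} [LinearOrder α] (a b c : α) :
    Ι a b ∆ Ι b c = Ι a c := by
  ext t
  simp only [Set.mem_symmDiff, Set.mem_uIoc]
  grind

lemma Set.indicator_symmDiff_eq_indicator_piecewise_neg_add {α β : Type*} [AddGroup β]
    (s t : Set α) [DecidablePred (· ∈ s)] (g : α → β) :
    (s ∆ t).indicator g = t.indicator (s.piecewise (-g) g) + s.indicator g := by
  ext x
  by_cases hs : x ∈ s <;> by_cases ht : x ∈ t <;> simp [Set.mem_symmDiff, hs, ht]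

section

variable {α E : Type*} [MeasurableSpace α] [NormedAddCommGroup E] {p : ℝ≥0∞} {μ : Measure α}
  {s : Set α} [DecidablePred (· ∈ s)] {f : α → E}

lemma eLpNorm_piecewise_neg :
    eLpNorm (s.piecewise (-f) f) p μ = eLpNorm f p μ :=
  eLpNorm_congr_norm_ae <| ae_of_all _ fun x ↦ by
    by_cases hx : x ∈ s <;> simp [hx]

lemma MemLp.piecewise_neg (hs : MeasurableSet s) (hf : MemLp f p μ) :
    MemLp (s.piecewise (-f) f) p μ :=
  MemLp.piecewise hs (hf.neg.restrict s) (hf.restrict sᶜ)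

end

lemma setIntegral_uIoc_eq_setIntegral_piecewise_neg_add {E : Type*} [NormedAddCommGroup E]
    [NormedSpace ℝ E] {μ : Measure ℝ} {g : ℝ → E} (hg : Integrable g μ) (a b x : ℝ)
    [DecidablePred (· ∈ Ι a b)] :
    ∫ t in Ι b x, g t ∂μ = ∫ t in Ι a x, (Ι a b).piecewise (-g) g t ∂μ + ∫ t in Ι a b, g t ∂μ := by
  have hpw : Integrable ((Ι a b).piecewise (-g) g) μ :=
    memLp_one_iff_integrable.1 <|
      MemLp.piecewise_neg measurableSet_uIoc (memLp_one_iff_integrable.2 hg)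
  rw [← integral_indicator measurableSet_uIoc, ← integral_indicator measurableSet_uIoc,
    ← integral_indicator measurableSet_uIoc, ← integral_add (hpw.indicator measurableSet_uIoc)
    (hg.indicator measurableSet_uIoc), ← Set.uIoc_symmDiff_uIoc b a x, Set.uIoc_comm b a,
    Set.indicator_symmDiff_eq_indicator_piecewise_neg_add]
  rfl

lemma hardyABase_le_hardyABase {p q : ℝ≥0∞} (hpq : 1 / p + 1 / q = 1) {K : Set ℝ}
    {u v : ℝ → ℝ} (hu : MemLp u q (volume.restrict K)) (a b : ℝ) :
    hardyABase p b K u v ≤ hardyABase p a K u v := by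
  classical
  refine iSup₂_le fun f ⟨hf, hf_le⟩ => ?_
  have : HolderTriple p q 1 := ⟨by simpa only [one_div, inv_one] using hpq⟩
  have huf : Integrable (u * f) (volume.restrict K) := mul_comm f u ▸ hf.integrable_mul hu
  set F := (Ι a b).piecewise (-f) f
  set c := ∫ t in Ι a b ∩ K, u t * f t
  have hrebase (x : ℝ) : ∫ t in Ι b x ∩ K, u t * f t = (∫ t in Ι a x ∩ K, u t * F t) + c := by
    have huF : (fun t => u t * F t) = (Ι a b).piecewise (-fun t => u t * f t) (u * f) := by
      ext t
      by_cases ht : t ∈ Ι a b <;> simp [F, ht]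
    simp only [c, huF, ← Measure.restrict_restrict measurableSet_uIoc]
    exact setIntegral_uIoc_eq_setIntegral_piecewise_neg_add huf a b x
  calc ⨅ α : ℝ, eLpNorm (fun x => v x * ((∫ t in Ι b x ∩ K, u t * f t) - α)) p
        (volume.restrict K)
      = ⨅ α : ℝ, eLpNorm (fun x => v x * ((∫ t in Ι a x ∩ K, u t * F t) - α)) p
        (volume.restrict K) := by
        refine (Equiv.subRight c).iInf_congr fun α =>
          congrArg (eLpNorm · p _) (funext fun x => ?_)
        simp only [hrebase, Equiv.subRight_apply]
        ring
    _ ≤ hardyABase p a K u v :=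
        le_iSup₂_of_le F ⟨MemLp.piecewise_neg measurableSet_uIoc hf,
          eLpNorm_piecewise_neg.trans_le hf_le⟩ le_rfl

theorem stmt_13_general (p q : ℝ≥0∞) (hpq : 1 / p + 1 / q = 1)
    (K : Set ℝ) (u v : ℝ → ℝ)
    (hu : MemLp u q (volume.restrict K))
    (a b : ℝ) :
    hardyABase p a K u v = hardyABase p b K u v :=
  (hardyABase_le_hardyABase hpq hu b a).antisymm (hardyABase_le_hardyABase hpq hu a b)

/-- (Lemma 3.2, interval case.) For `1 < p ≤ ∞`, the quotient norm
`A(K) = ‖S T_{a,K}‖` is independent of the base point `a`. -/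
theorem stmt_13 (p q : ℝ≥0∞) (hp : 1 < p) (hpq : 1 / p + 1 / q = 1)
    (K : Set ℝ) (hK : MeasurableSet K) (u v : ℝ → ℝ)
    (hu : MemLp u q (volume.restrict K)) (hv : MemLp v p (volume.restrict K))
    (a b : ℝ) :
    hardyABase p a K u v = hardyABase p b K u v :=
  stmt_13_general p q hpq K u v hu a b
end

section
/- Let {σ_j}_{j ∈ J} be a countable family of nonnegative reals and {a_k}_{k ≥ 1} a non-increasing nonnegative sequence. Suppose there exist constants B ≥ 1, c > 0 such that for all t > 0, #{j : σ_j > t} ≤ 4B·#{k : a_k > c t} + 6B. Then for every q > 0 with {a_k} ∈ l^q and {σ_j} bounded with sup_j σ_j ≤ a_1, one has ‖{σ_j}‖_{l^q}^q ≤ c₁ ‖{a_k}‖_{l^q}^q + c₂ (sup_j σ_j)^q ≤ C ‖{a_k}‖_{l^q}^q for constants c₁, c₂, C depending only on B, c, q. -/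
open Set
open MeasureTheory ENNReal
open scoped NNReal

/-! By the layer cake formula, `∑ σⱼ ^ q = q ∫₀^∞ t ^ (q - 1) #{σ > t} dt`. The integrand
vanishes for `t ≥ λ := sup σ`, so integrating the counting hypothesis over `(0, λ)` gives
`‖σ‖_q^q ≤ 4B c^(-q) ‖a‖_q^q + 6B λ^q`; finally `λ ≤ a₀ ≤ ‖a‖_q`. -/

theorem tsum_ofReal_rpow_eq_lintegral_encard {ι : Type*} {f : ι → ℝ} (hf : ∀ i, 0 ≤ f i)
    {p : ℝ} (hp : 0 < p) :
    ∑' i, ENNReal.ofReal (f i ^ p) =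
      ENNReal.ofReal p *
        ∫⁻ t in Ioi 0, ({i | t < f i}.encard : ℝ≥0∞) * ENNReal.ofReal (t ^ (p - 1)) := by
  let _ : MeasurableSpace ι := ⊤
  rw [← lintegral_count, lintegral_rpow_eq_lintegral_meas_lt_mul _ (.of_forall hf)
    Measurable.of_discrete.aemeasurable hp]
  simp only [Measure.count_apply (DiscreteMeasurableSpace.forall_measurableSet _)]

theorem ofReal_mul_lintegral_Ioo_rpow_sub_one {p x : ℝ} (hp : 0 < p) (hx : 0 ≤ x) :
    ENNReal.ofReal p * ∫⁻ t in Ioo 0 x, ENNReal.ofReal (t ^ (p - 1)) = ENNReal.ofReal (x ^ p) := by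
  have hint : IntegrableOn (fun t : ℝ => t ^ (p - 1)) (Ioo 0 x) :=
    (intervalIntegrable_iff_integrableOn_Ioo_of_le hx).mp
      (intervalIntegral.intervalIntegrable_rpow' (by linarith))
  have hval : ∫ t in Ioo 0 x, t ^ (p - 1) = x ^ p / p := by
    rw [← integral_Ioc_eq_integral_Ioo, ← intervalIntegral.integral_of_le hx,
      integral_rpow (Or.inl (by linarith))]
    simp [hp.ne']
  rw [← ofReal_integral_eq_lintegral_ofReal hint
    ((ae_restrict_mem measurableSet_Ioo).mono fun t ht => Real.rpow_nonneg ht.1.le _),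
    hval, ← ENNReal.ofReal_mul hp.le, mul_div_cancel₀ _ hp.ne']

theorem tsum_ofReal_rpow_le_of_encard_le {ι κ : Type*} {σ : ι → ℝ} {a : κ → ℝ} {x p : ℝ}
    {A D : ℝ≥0∞} (hσ : ∀ i, 0 ≤ σ i) (ha : ∀ k, 0 ≤ a k) (hσx : ∀ i, σ i ≤ x) (hx : 0 ≤ x)
    (hp : 0 < p)
    (hcount : ∀ t, 0 < t → t < x →
      ({i | t < σ i}.encard : ℝ≥0∞) ≤ A * {k | t < a k}.encard + D) :
    ∑' i, ENNReal.ofReal (σ i ^ p) ≤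
      A * ∑' k, ENNReal.ofReal (a k ^ p) + D * ENNReal.ofReal (x ^ p) := by
  set w : ℝ → ℝ≥0∞ := fun t => ENNReal.ofReal (t ^ (p - 1))
  have hw : Measurable w := by fun_prop
  have hNa : Measurable fun t : ℝ => ({k | t < a k}.encard : ℝ≥0∞) :=
    Antitone.measurable fun s t hst =>
      ENat.toENNReal_le.mpr (encard_le_encard fun k hk => hst.trans_lt hk)
  have hpt : ∀ t ∈ Ioi (0 : ℝ), ({i | t < σ i}.encard : ℝ≥0∞) * w t ≤
      A * (({k | t < a k}.encard : ℝ≥0∞) * w t) + (Iio x).indicator (fun t => D * w t) t := by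
    intro t ht
    by_cases htx : t < x
    · rw [indicator_of_mem (show t ∈ Iio x from htx), ← mul_assoc, ← add_mul]
      exact mul_le_mul_left (hcount t ht htx) _
    · have : {i | t < σ i} = ∅ :=
        eq_empty_of_forall_notMem fun i hi => htx (lt_of_lt_of_le hi (hσx i))
      simp [this]
  rw [tsum_ofReal_rpow_eq_lintegral_encard hσ hp, tsum_ofReal_rpow_eq_lintegral_encard ha hp,
    ← ofReal_mul_lintegral_Ioo_rpow_sub_one hp hx]
  calc ENNReal.ofReal p * ∫⁻ t in Ioi 0, ({i | t < σ i}.encard : ℝ≥0∞) * w t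
      ≤ ENNReal.ofReal p * ∫⁻ t in Ioi 0,
          A * (({k | t < a k}.encard : ℝ≥0∞) * w t) + (Iio x).indicator (fun t => D * w t) t :=
        mul_le_mul_right (setLIntegral_mono' measurableSet_Ioi hpt) _
    _ = _ := by
      rw [lintegral_add_right _ ((hw.const_mul D).indicator measurableSet_Iio),
        lintegral_const_mul A (f := fun t => ({k | t < a k}.encard : ℝ≥0∞) * w t) (hNa.mul hw),
        lintegral_indicator measurableSet_Iio,
        Measure.restrict_restrict measurableSet_Iio, Iio_inter_Ioi, lintegral_const_mul _ hw]
      ring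

theorem summable_and_tsum_le_of_tsum_ofReal_le {ι : Type*} {f : ι → ℝ} {R : ℝ}
    (hf : ∀ i, 0 ≤ f i) (hR : 0 ≤ R) (h : ∑' i, ENNReal.ofReal (f i) ≤ ENNReal.ofReal R) :
    Summable f ∧ ∑' i, f i ≤ R := by
  have hsum : Summable f :=
    (ENNReal.summable_toReal (ne_top_of_le_ne_top ofReal_ne_top h)).congr
      fun i => toReal_ofReal (hf i)
  refine ⟨hsum, ?_⟩
  rwa [← ENNReal.ofReal_tsum_of_nonneg hf hsum, ENNReal.ofReal_le_ofReal_iff hR] at h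

theorem summable_rpow_and_tsum_rpow_le_of_encard_le {ι κ : Type*} {σ : ι → ℝ} {a : κ → ℝ}
    {x p : ℝ} {A D : ℝ≥0} (hσ : ∀ i, 0 ≤ σ i) (ha : ∀ k, 0 ≤ a k) (hσx : ∀ i, σ i ≤ x)
    (hx : 0 ≤ x) (hp : 0 < p) (ha_sum : Summable fun k => a k ^ p)
    (hcount : ∀ t, 0 < t → t < x →
      ({i | t < σ i}.encard : ℝ≥0∞) ≤ A * {k | t < a k}.encard + D) :
    Summable (fun i => σ i ^ p) ∧ ∑' i, σ i ^ p ≤ A * ∑' k, a k ^ p + D * x ^ p := by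
  have hap : ∀ k, 0 ≤ a k ^ p := fun k => Real.rpow_nonneg (ha k) p
  have hA : 0 ≤ (A : ℝ) * ∑' k, a k ^ p := mul_nonneg A.coe_nonneg (tsum_nonneg hap)
  have hD : 0 ≤ (D : ℝ) * x ^ p := mul_nonneg D.coe_nonneg (Real.rpow_nonneg hx p)
  refine summable_and_tsum_le_of_tsum_ofReal_le (fun i => Real.rpow_nonneg (hσ i) p)
    (add_nonneg hA hD) ?_
  rw [ENNReal.ofReal_add hA hD, ENNReal.ofReal_mul A.coe_nonneg, ENNReal.ofReal_mul D.coe_nonneg,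
    ENNReal.ofReal_tsum_of_nonneg hap ha_sum, ofReal_coe_nnreal, ofReal_coe_nnreal]
  exact tsum_ofReal_rpow_le_of_encard_le hσ ha hσx hx hp hcount

/-- (Abstract distribution-function argument of Lemmas 6.9–6.10 and
Theorem 6.11.) Suppose `#{j : σ_j > t} ≤ 4B·#{k : a_k > c t} + 6B` for all `t > 0`, the
nonnegative sequence `a` is non-increasing and `q`-summable, and `σ_j ≤ a_1` for all `j`.
Then `‖σ‖_q^q ≤ c₁ ‖a‖_q^q + c₂ (sup_j σ_j)^q ≤ C ‖a‖_q^q`, with constants depending only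
on `B, c, q`. -/
theorem stmt_18 (B : ℕ) (hB : 1 ≤ B) (c : ℝ) (hc : 0 < c) (q : ℝ) (hq : 0 < q) :
    ∃ c₁ c₂ C : ℝ, 0 < c₁ ∧ 0 < c₂ ∧ 0 < C ∧
      ∀ {J : Type} [Countable J] (σ : J → ℝ) (a : ℕ → ℝ),
        (∀ j, 0 ≤ σ j) → (∀ k, 0 ≤ a k) → Antitone a →
        Summable (fun k => a k ^ q) →
        (∀ j, σ j ≤ a 0) →
        (∀ t : ℝ, 0 < t →
          {j | σ j > t}.encard ≤ 4 * (B : ℕ∞) * {k | a k > c * t}.encard + 6 * (B : ℕ∞)) →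
        Summable (fun j => σ j ^ q) ∧
        (∑' j, σ j ^ q) ≤ c₁ * (∑' k, a k ^ q) + c₂ * (⨆ j, σ j) ^ q ∧
        (∑' j, σ j ^ q) ≤ C * ∑' k, a k ^ q := by
  have hB₀ : (0 : ℝ) < B := by exact_mod_cast hB
  refine ⟨4 * B / c ^ q, 6 * B, 4 * B / c ^ q + 6 * B, by positivity, by positivity,
    by positivity, ?_⟩
  intro J _ σ a hσ ha _ ha_sum hσa hcount
  set x := ⨆ j, σ j
  have hσx : ∀ j, σ j ≤ x := le_ciSup ⟨a 0, forall_mem_range.mpr hσa⟩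
  have hx : 0 ≤ x := Real.iSup_nonneg hσ
  have hxa : x ^ q ≤ ∑' k, a k ^ q :=
    (Real.rpow_le_rpow hx (Real.iSup_le hσa (ha 0)) hq.le).trans
      (ha_sum.le_tsum 0 fun k _ => Real.rpow_nonneg (ha k) q)
  have hsum_div : ∑' k, (a k / c) ^ q = (∑' k, a k ^ q) / c ^ q := by
    simp only [Real.div_rpow (ha _) hc.le, tsum_div_const]
  obtain ⟨hσ_sum, hσ_le⟩ :=
    summable_rpow_and_tsum_rpow_le_of_encard_le (A := 4 * B) (D := 6 * B) hσ
      (fun k => div_nonneg (ha k) hc.le) hσx hx hq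
      (by simpa only [Real.div_rpow (ha _) hc.le] using ha_sum.div_const (c ^ q))
      fun t ht _ => by
        have := ENat.toENNReal_le.mpr (hcount t ht)
        push_cast at this ⊢
        simpa only [lt_div_iff₀' hc] using this
  push_cast at hσ_le
  rw [hsum_div, ← mul_div_assoc, mul_div_right_comm] at hσ_le
  refine ⟨hσ_sum, hσ_le, ?_⟩
  calc ∑' j, σ j ^ q ≤ 4 * B / c ^ q * ∑' k, a k ^ q + 6 * B * x ^ q := hσ_le
    _ ≤ (4 * B / c ^ q + 6 * B) * ∑' k, a k ^ q := by
      rw [add_mul]; gcongr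
end
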